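/- Left monotonicity of the strict curried HORPO: if s ⊐ t with s : σ ⇒ τ, and u ⊒ v with u : σ, then s u ⊐ t v. -/
import Mathlib


namespace Horpo

/-- Simple types over a single collapsed sort ι. -/
inductive Ty where
  | base : Ty
  | arrow : Ty → Ty → Ty
deriving DecidableEq

/-- The argument types of a type: argTypes (σ₁ ⇒ … ⇒ σ_m ⇒ ι) = [σ₁,…,σ_m]. -/
def Ty.argTypes : Ty → List Ty
  | .base => []
  | .arrow a b => a :: b.argTypes

/-- A signature: typed function symbols over F, typed variables over V,
    a precedence ⊵ (`prec`) and a filter π (`pi`, using 1-based indices). -/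
structure Sig (F V : Type) where
  fty : F → Ty
  vty : V → Ty
  prec : F → F → Prop
  pi : F → Finset ℕ

variable {F V : Type}

/-- f ≡ g : equivalence part of the precedence. -/
def Sig.equiv (S : Sig F V) (f g : F) : Prop := S.prec f g ∧ S.prec g f

/-- f ⊳ g : strict part of the precedence. -/
def Sig.sgt (S : Sig F V) (f g : F) : Prop := S.prec f g ∧ ¬ S.prec g f

/-- maximal arity m of a symbol f :: σ₁ ⇒ … ⇒ σ_m ⇒ ι. -/
def Sig.arity (S : Sig F V) (f : F) : ℕ := (S.fty f).argTypes.length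

/-- Applicative (curried) terms. -/
inductive Tm (F V : Type) where
  | fv : V → Tm F V
  | fn : F → Tm F V
  | app : Tm F V → Tm F V → Tm F V

/-- h t₁ ⋯ t_n -/
def Tm.appList (h : Tm F V) (ts : List (Tm F V)) : Tm F V := ts.foldl Tm.app h

/-- Partial typing function. -/
def typeOf (S : Sig F V) : Tm F V → Option Ty
  | .fv x => some (S.vty x)
  | .fn f => some (S.fty f)
  | .app s t =>
    match typeOf S s, typeOf S t with
    | some (.arrow a b), some c => if a = c then some b else none
    | _, _ => none

/-- s and t are well-typed with the same type (structure). -/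
def sameTy (S : Sig F V) (s t : Tm F V) : Prop :=
  ∃ τ, typeOf S s = some τ ∧ typeOf S t = some τ

/-- The equivalence relation ≈, by the rules (Eq-mono) and (Eq-args). -/
inductive Approx (S : Sig F V) : Tm F V → Tm F V → Prop where
  | mono (x : V) (ss ts : List (Tm F V)) :
      ss.length = ts.length →
      (∀ (i : ℕ) (h1 : i < ss.length) (h2 : i < ts.length),
        Approx S (ss.get ⟨i, h1⟩) (ts.get ⟨i, h2⟩)) →
      sameTy S (Tm.appList (.fv x) ss) (Tm.appList (.fv x) ts) →
      Approx S (Tm.appList (.fv x) ss) (Tm.appList (.fv x) ts)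
  | args (f g : F) (ss ts : List (Tm F V)) :
      S.equiv f g → S.fty f = S.fty g → S.pi f = S.pi g →
      ss.length = ts.length →
      (∀ (i : ℕ) (h1 : i < ss.length) (h2 : i < ts.length),
        i + 1 ∈ S.pi f → Approx S (ss.get ⟨i, h1⟩) (ts.get ⟨i, h2⟩)) →
      sameTy S (Tm.appList (.fn f) ss) (Tm.appList (.fn g) ts) →
      Approx S (Tm.appList (.fn f) ss) (Tm.appList (.fn g) ts)

mutual
/-- s ⊒ t  iff  s ≈ t or s ⊐ t. -/
inductive GrEq (S : Sig F V) : Tm F V → Tm F V → Prop where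
  | of_approx {s t : Tm F V} : Approx S s t → GrEq S s t
  | of_gr {s t : Tm F V} : Gr S s t → GrEq S s t

/-- The strict relation ⊐, by rules (Gr-mono), (Gr-args), (Gr-rpo). -/
inductive Gr (S : Sig F V) : Tm F V → Tm F V → Prop where
  | mono (x : V) (ss ts : List (Tm F V)) (i : ℕ)
      (hi1 : i < ss.length) (hi2 : i < ts.length) :
      ss.length = ts.length →
      (∀ (j : ℕ) (h1 : j < ss.length) (h2 : j < ts.length),
        GrEq S (ss.get ⟨j, h1⟩) (ts.get ⟨j, h2⟩)) →
      Gr S (ss.get ⟨i, hi1⟩) (ts.get ⟨i, hi2⟩) →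
      sameTy S (Tm.appList (.fv x) ss) (Tm.appList (.fv x) ts) →
      Gr S (Tm.appList (.fv x) ss) (Tm.appList (.fv x) ts)
  | args (f g : F) (ss ts : List (Tm F V)) (i : ℕ)
      (hi1 : i < ss.length) (hi2 : i < ts.length) :
      S.equiv f g → S.fty f = S.fty g → S.pi f = S.pi g →
      ss.length = ts.length →
      (∀ (j : ℕ) (h1 : j < ss.length) (h2 : j < ts.length),
        j + 1 ∈ S.pi f → GrEq S (ss.get ⟨j, h1⟩) (ts.get ⟨j, h2⟩)) →
      i + 1 ∈ S.pi f →
      Gr S (ss.get ⟨i, hi1⟩) (ts.get ⟨i, hi2⟩) →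
      sameTy S (Tm.appList (.fn f) ss) (Tm.appList (.fn g) ts) →
      Gr S (Tm.appList (.fn f) ss) (Tm.appList (.fn g) ts)
  | rpo {s t : Tm F V} : Rpo S s t → sameTy S s t → Gr S s t

/-- The relation ⊐⊐, by rules (Rpo-select), (Rpo-appl), (Rpo-copy), (Rpo-lex).
    In each case the left side is f s₁⋯s_n with {n+1,…,m} ⊆ π(f). -/
inductive Rpo (S : Sig F V) : Tm F V → Tm F V → Prop where
  | select (f : F) (ss : List (Tm F V)) (t : Tm F V) (i : ℕ) (hi : i < ss.length) :
      ss.length ≤ S.arity f →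
      (∀ k : ℕ, ss.length + 1 ≤ k → k ≤ S.arity f → k ∈ S.pi f) →
      i + 1 ∈ S.pi f →
      GrEq S (ss.get ⟨i, hi⟩) t →
      Rpo S (Tm.appList (.fn f) ss) t
  | appl (f : F) (ss : List (Tm F V)) (t0 : Tm F V) (ts : List (Tm F V)) :
      ss.length ≤ S.arity f →
      (∀ k : ℕ, ss.length + 1 ≤ k → k ≤ S.arity f → k ∈ S.pi f) →
      ts ≠ [] →
      (∀ (i : ℕ) (h : i < ts.length), Rpo S (Tm.appList (.fn f) ss) (ts.get ⟨i, h⟩)) →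
      Rpo S (Tm.appList (.fn f) ss) (Tm.appList t0 ts)
  | copy (f : F) (ss : List (Tm F V)) (g : F) (ts : List (Tm F V)) :
      ss.length ≤ S.arity f →
      (∀ k : ℕ, ss.length + 1 ≤ k → k ≤ S.arity f → k ∈ S.pi f) →
      S.sgt f g →
      (∀ (i : ℕ) (h : i < ts.length), i + 1 ∈ S.pi g →
        Rpo S (Tm.appList (.fn f) ss) (ts.get ⟨i, h⟩)) →
      Rpo S (Tm.appList (.fn f) ss) (Tm.appList (.fn g) ts)
  | lex (f : F) (ss : List (Tm F V)) (g : F) (ts : List (Tm F V)) (i : ℕ)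
      (hi1 : i < ss.length) (hi2 : i < ts.length) :
      ss.length ≤ S.arity f →
      (∀ k : ℕ, ss.length + 1 ≤ k → k ≤ S.arity f → k ∈ S.pi f) →
      S.equiv f g →
      i + 1 ∈ S.pi f → i + 1 ∈ S.pi g →
      (∀ k : ℕ, 1 ≤ k → k ≤ i + 1 → (k ∈ S.pi f ↔ k ∈ S.pi g)) →
      (∀ (j : ℕ) (h1 : j < ss.length) (h2 : j < ts.length), j < i → j + 1 ∈ S.pi f →
        Approx S (ss.get ⟨j, h1⟩) (ts.get ⟨j, h2⟩)) →
      Gr S (ss.get ⟨i, hi1⟩) (ts.get ⟨i, hi2⟩) →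
      (∀ (j : ℕ) (h : j < ts.length), i < j → j + 1 ∈ S.pi g →
        Rpo S (Tm.appList (.fn f) ss) (ts.get ⟨j, h⟩)) →
      Rpo S (Tm.appList (.fn f) ss) (Tm.appList (.fn g) ts)
end

/-- Substitution application. -/
def subst (γ : V → Tm F V) : Tm F V → Tm F V
  | .fv x => γ x
  | .fn f => .fn f
  | .app s t => .app (subst γ s) (subst γ t)

/-- s is terminating: no infinite ⊐-descending sequence starting at s. -/
def Terminating (S : Sig F V) (s : Tm F V) : Prop :=
  ¬ ∃ c : ℕ → Tm F V, c 0 = s ∧ ∀ n, Gr S (c n) (c (n + 1))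

/-- Computability, by recursion on the type structure. -/
def Computable (S : Sig F V) : Ty → Tm F V → Prop
  | .base, s => Terminating S s
  | .arrow a b, s =>
      ∀ t : Tm F V, typeOf S t = some a → Computable S a t → Computable S b (Tm.app s t)

/-- s is a well-typed computable term. -/
def Comp (S : Sig F V) (s : Tm F V) : Prop :=
  ∃ τ, typeOf S s = some τ ∧ Computable S τ s

/-- [s_i | i ∈ π(f)] : the list of arguments regarded by the filter. -/
def filtered (S : Sig F V) (f : F) (ss : List (Tm F V)) : List (Tm F V) :=
  (List.range ss.length).filterMap (fun i => if i + 1 ∈ S.pi f then ss[i]? else none)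

/-- The (E, R)-lexicographic extension to lists: xs is greater than ys. -/
def LexExt (E R : α → α → Prop) (xs ys : List α) : Prop :=
  ∃ (i : ℕ) (h1 : i < xs.length) (h2 : i < ys.length),
    (∀ (j : ℕ) (hj1 : j < xs.length) (hj2 : j < ys.length), j < i →
      E (xs.get ⟨j, hj1⟩) (ys.get ⟨j, hj2⟩)) ∧
    R (xs.get ⟨i, h1⟩) (ys.get ⟨i, h2⟩)


lemma appList_concat (h : Tm F V) (ss : List (Tm F V)) (u : Tm F V) :
    Tm.appList h (ss ++ [u]) = Tm.app (Tm.appList h ss) u := by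
  simp [Tm.appList, List.foldl_append]

lemma Approx.sameTy' {S : Sig F V} {s t : Tm F V} (h : Approx S s t) : sameTy S s t := by
  cases h <;> assumption

lemma Gr.sameTy' {S : Sig F V} {s t : Tm F V} (h : Gr S s t) : sameTy S s t := by
  cases h <;> assumption

lemma GrEq.sameTy' {S : Sig F V} {s t : Tm F V} (h : GrEq S s t) : sameTy S s t := by
  cases h with
  | of_approx h => exact h.sameTy'
  | of_gr h => exact h.sameTy'

lemma typeOf_app {S : Sig F V} {s u : Tm F V} {σ τ : Ty}
    (hs : typeOf S s = some (.arrow σ τ)) (hu : typeOf S u = some σ) :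
    typeOf S (Tm.app s u) = some τ := by
  simp [typeOf, hs, hu]

lemma typeOf_app_inv {S : Sig F V} {s u : Tm F V} {ρ : Ty}
    (h : typeOf S (Tm.app s u) = some ρ) :
    ∃ σ, typeOf S s = some (.arrow σ ρ) ∧ typeOf S u = some σ := by
  unfold typeOf at h
  split at h
  case _ a b c hs hu =>
    split at h
    · exact ⟨c, by injection h with h; subst h; rwa [‹a = c›] at hs, hu⟩
    · exact absurd h (by simp)
  case _ => exact absurd h (by simp)

lemma typeOf_appList_le {S : Sig F V} :
    ∀ (ss : List (Tm F V)) (h : Tm F V) (ρ : Ty),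
      typeOf S (Tm.appList h ss) = some ρ →
      ∃ ρ₀, typeOf S h = some ρ₀ ∧ ss.length + ρ.argTypes.length ≤ ρ₀.argTypes.length := by
  intro ss
  induction ss with
  | nil => intro h ρ hty; exact ⟨ρ, hty, by simp⟩
  | cons a ss ih =>
    intro h ρ hty
    obtain ⟨ρ₁, hρ₁, hle⟩ := ih (Tm.app h a) ρ hty
    obtain ⟨c, hc, _⟩ := typeOf_app_inv hρ₁
    refine ⟨.arrow c ρ₁, hc, ?_⟩
    simp [Ty.argTypes]
    omega

lemma Rpo.left_form {S : Sig F V} {s t : Tm F V} (h : Rpo S s t) :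
    ∃ f ss, s = Tm.appList (.fn f) ss ∧ ss.length ≤ S.arity f ∧
      (∀ k, ss.length + 1 ≤ k → k ≤ S.arity f → k ∈ S.pi f) := by
  cases h <;> exact ⟨_, _, rfl, by assumption, by assumption⟩

/-- Left monotonicity of ⊐: if s ⊐ t with s : σ ⇒ τ and u ⊒ v with u : σ,
then s u ⊐ t v. -/
theorem gr_left_mono (S : Sig F V) (σ τ : Ty) (s t u v : Tm F V)
    (hs : typeOf S s = some (.arrow σ τ)) (hu : typeOf S u = some σ)
    (h1 : Gr S s t) (h2 : GrEq S u v) :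
    Gr S (Tm.app s u) (Tm.app t v) := by
  obtain ⟨ρ, hsρ, ht⟩ := h1.sameTy'
  rw [hs] at hsρ
  injection hsρ with e; subst e
  obtain ⟨ρ', huρ, hv⟩ := h2.sameTy'
  rw [hu] at huρ
  injection huρ with e; subst e
  have hsame : sameTy S (Tm.app s u) (Tm.app t v) :=
    ⟨τ, typeOf_app hs hu, typeOf_app ht hv⟩
  cases h1 with
  | mono x ss ts i hi1 hi2 hlen hall hstr hst =>
    rw [← appList_concat, ← appList_concat]
    refine Gr.mono x (ss ++ [u]) (ts ++ [v]) i
      (by simp; omega) (by simp; omega) (by simp [hlen]) ?_ ?_ ?_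
    · intro j hj1 hj2
      simp only [List.get_eq_getElem]
      rcases lt_or_ge j ss.length with hj | hj
      · rw [List.getElem_append_left hj, List.getElem_append_left (hlen ▸ hj)]
        exact hall j hj (hlen ▸ hj)
      · have hj' : j = ss.length := by simp at hj1; omega
        subst hj'
        rw [List.getElem_concat_length, List.getElem_append_right (by omega)]
        · simpa [hlen] using h2
        · rfl
    · simp only [List.get_eq_getElem]
      rw [List.getElem_append_left hi1, List.getElem_append_left hi2]
      exact hstr
    · rw [appList_concat, appList_concat]; exact hsame
  | args f g ss ts i hi1 hi2 heq hfty hpi hlen hall hipi hstr hst =>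
    rw [← appList_concat, ← appList_concat]
    refine Gr.args f g (ss ++ [u]) (ts ++ [v]) i
      (by simp; omega) (by simp; omega) heq hfty hpi (by simp [hlen]) ?_ hipi ?_ ?_
    · intro j hj1 hj2 hjpi
      simp only [List.get_eq_getElem]
      rcases lt_or_ge j ss.length with hj | hj
      · rw [List.getElem_append_left hj, List.getElem_append_left (hlen ▸ hj)]
        exact hall j hj (hlen ▸ hj) hjpi
      · have hj' : j = ss.length := by simp at hj1; omega
        subst hj'
        rw [List.getElem_concat_length, List.getElem_append_right (by omega)]
        · simpa [hlen] using h2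
        · rfl
    · simp only [List.get_eq_getElem]
      rw [List.getElem_append_left hi1, List.getElem_append_left hi2]
      exact hstr
    · rw [appList_concat, appList_concat]; exact hsame
  | rpo hrpo hst =>
    obtain ⟨f, ss, rfl, har, hπ⟩ := hrpo.left_form
    obtain ⟨ρ₀, hρ₀, hlen⟩ := typeOf_appList_le ss (Tm.fn f) _ hs
    have hρ₀' : ρ₀ = S.fty f := by
      symm; simpa [typeOf] using hρ₀
    subst hρ₀'
    have harity : ss.length + 1 ≤ S.arity f := by
      simp [Sig.arity]
      have : 1 ≤ (Ty.arrow σ τ).argTypes.length := by simp [Ty.argTypes]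
      omega
    have hmem : ss.length + 1 ∈ S.pi f := hπ _ le_rfl harity
    refine Gr.rpo ?_ hsame
    have hsel : Rpo S (Tm.appList (.fn f) (ss ++ [u])) v := by
      refine Rpo.select f (ss ++ [u]) v ss.length (by simp)
        (by simpa using harity) ?_ hmem ?_
      · intro k hk1 hk2
        exact hπ k (by simp at hk1; omega) hk2
      · simp only [List.get_eq_getElem, List.getElem_concat_length]
        exact h2
    have : Tm.app t v = Tm.appList t [v] := rfl
    rw [this, ← appList_concat]
    refine Rpo.appl f (ss ++ [u]) t [v] (by simpa using harity) ?_ (by simp) ?_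
    · intro k hk1 hk2
      exact hπ k (by simp at hk1; omega) hk2
    · intro i hi
      have : i = 0 := by simpa using hi
      subst this
      simpa using hsel

end Horpo
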